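/- arXiv:0904.1734 — 2 statements merged into one kernel-verified Lean document; each statement's English description precedes it below -/
import Mathlib

section
/- Let (x_n) be a bounded real sequence and ω = arccos(1/3). Then limsup_{n→∞} |cos(6(n + 1/2)ω − π/4) + x_n/n|^{1/n} = 1. -/
open Real Filter

/-- For any bounded real sequence `(x_n)` and `ω = arccos(1/3)`,
`limsup_{n→∞} |cos(6(n+1/2)ω − π/4) + x_n/n|^{1/n} = 1`. -/
theorem limsup_nth_root_cos_eq_one (x : ℕ → ℝ) (hx : ∃ C : ℝ, ∀ n, |x n| ≤ C) :
    Filter.limsup (fun n : ℕ =>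
        |Real.cos (6 * ((n : ℝ) + 1 / 2) * Real.arccos (1 / 3) - π / 4) + x n / n|
          ^ ((1 : ℝ) / n)) Filter.atTop = 1 := by
  obtain ⟨C, hC⟩ := hx
  have hC0 : 0 ≤ C := le_trans (abs_nonneg _) (hC 0)
  set ω : ℝ := Real.arccos (1 / 3) with hωdef
  set θ : ℕ → ℝ := fun n => 6 * ((n : ℝ) + 1 / 2) * ω - π / 4 with hθdef
  set a : ℕ → ℝ := fun n => Real.cos (θ n) + x n / n with hadef
  set f : ℕ → ℝ := fun n => |a n| ^ ((1 : ℝ) / n) with hfdef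
  -- cos ω = 1/3
  have hcω : Real.cos ω = 1 / 3 := Real.cos_arccos (by norm_num) (by norm_num)
  -- cos (6ω) = 329/729
  have hc6 : Real.cos (6 * ω) = 329 / 729 := by
    have h6 : (6 : ℝ) * ω = 2 * (3 * ω) := by ring
    rw [h6, Real.cos_two_mul, Real.cos_three_mul, hcω]
    norm_num
  have hs6 : Real.sin (6 * ω) ≠ 0 := by
    intro h
    have := Real.sin_sq_add_cos_sq (6 * ω)
    rw [h, hc6] at this
    norm_num at this
  set s : ℝ := |Real.sin (6 * ω)| with hsdef
  have hs0 : 0 < s := abs_pos.2 hs6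
  have hs1 : s ≤ 1 := abs_sin_le_one _
  set δ : ℝ := s / 4 with hδdef
  have hδ0 : 0 < δ := by positivity
  have hδ14 : δ ≤ 1 / 4 := by rw [hδdef]; linarith
  -- recurrence
  have hθsucc : ∀ n : ℕ, θ (n + 1) = θ n + 6 * ω := by
    intro n
    simp only [hθdef, Nat.cast_succ]
    ring
  -- key: frequently |cos θ n| is large
  have hkey : ∀ n : ℕ, δ ≤ |Real.cos (θ n)| ∨ δ ≤ |Real.cos (θ (n + 1))| := by
    intro n
    by_contra h
    push_neg at h
    obtain ⟨h1, h2⟩ := h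
    have hcos : Real.cos (θ (n + 1)) =
        Real.cos (θ n) * Real.cos (6 * ω) - Real.sin (θ n) * Real.sin (6 * ω) := by
      rw [hθsucc n, Real.cos_add]
    have hsin : |Real.sin (θ n)| * s =
        |Real.cos (θ n) * Real.cos (6 * ω) - Real.cos (θ (n + 1))| := by
      rw [hcos]
      rw [← abs_mul]
      ring_nf
    have hb1 : |Real.cos (θ n) * Real.cos (6 * ω) - Real.cos (θ (n + 1))| ≤
        |Real.cos (θ n)| + |Real.cos (θ (n + 1))| := by
      calc _ ≤ |Real.cos (θ n) * Real.cos (6 * ω)| + |Real.cos (θ (n + 1))| := abs_sub _ _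
        _ ≤ |Real.cos (θ n)| + |Real.cos (θ (n + 1))| := by
            rw [abs_mul]
            have := abs_cos_le_one (6 * ω)
            nlinarith [abs_nonneg (Real.cos (θ n))]
    have hsinlb : 3 / 4 ≤ |Real.sin (θ n)| := by
      nlinarith [Real.sin_sq_add_cos_sq (θ n), sq_abs (Real.sin (θ n)),
        sq_abs (Real.cos (θ n)), abs_nonneg (Real.sin (θ n)), abs_nonneg (Real.cos (θ n))]
    have : |Real.sin (θ n)| * s < 2 * δ := by
      rw [hsin]; linarith
    nlinarith
  have hfreqcos : ∃ᶠ n in atTop, δ ≤ |Real.cos (θ n)| := by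
    rw [frequently_atTop]
    intro N
    rcases hkey N with h | h
    · exact ⟨N, le_refl N, h⟩
    · exact ⟨N + 1, Nat.le_succ N, h⟩
  -- x n / n  → 0
  have hxn : Filter.Tendsto (fun n : ℕ => x n / n) atTop (nhds 0) := by
    apply squeeze_zero_norm (fun n => ?_) (tendsto_const_div_atTop_nhds_zero_nat C)
    rcases Nat.eq_zero_or_pos n with rfl | hn
    · simp [hC0]
    · rw [Real.norm_eq_abs, abs_div, abs_of_nonneg (by positivity : (0:ℝ) ≤ (n:ℝ))]
      apply div_le_div₀ (hC0) (hC n) (by exact_mod_cast hn) le_rfl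
  have hxsmall : ∀ᶠ n in atTop, |x n / n| < δ / 2 := by
    have := hxn.eventually (eventually_abs_sub_lt 0 (by positivity : (0:ℝ) < δ / 2))
    simpa using this
  -- frequently |a n| ≥ δ/2
  have hFa : ∃ᶠ n in atTop, δ / 2 ≤ |a n| := by
    apply (hfreqcos.and_eventually hxsmall).mono
    rintro n ⟨h1, h2⟩
    have : |Real.cos (θ n)| - |x n / n| ≤ |a n| := by
      have := abs_sub_abs_le_abs_sub (Real.cos (θ n)) (-(x n / n))
      simp only [abs_neg, sub_neg_eq_add] at this
      exact this
    linarith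
  -- global bound
  set M : ℝ := 1 + C with hMdef
  have hM1 : (1 : ℝ) ≤ M := by linarith
  have hxb : ∀ n : ℕ, |x n / n| ≤ C := by
    intro n
    rcases Nat.eq_zero_or_pos n with rfl | hn
    · simp [hC0]
    · rw [abs_div, abs_of_nonneg (by positivity : (0:ℝ) ≤ (n:ℝ))]
      calc |x n| / n ≤ |x n| / 1 :=
            div_le_div_of_nonneg_left (abs_nonneg _) one_pos (by exact_mod_cast hn)
        _ = |x n| := div_one _
        _ ≤ C := hC n
  have hab : ∀ n : ℕ, |a n| ≤ M := by
    intro n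
    calc |a n| ≤ |Real.cos (θ n)| + |x n / n| := abs_add_le _ _
      _ ≤ 1 + C := add_le_add (abs_cos_le_one _) (hxb n)
  -- f n ≤ M ^ (1/n)
  have hfM : ∀ n : ℕ, f n ≤ M ^ ((1 : ℝ) / n) :=
    fun n => Real.rpow_le_rpow (abs_nonneg _) (hab n) (by positivity)
  have hexp0 : Filter.Tendsto (fun n : ℕ => (1 : ℝ) / n) atTop (nhds 0) :=
    tendsto_one_div_atTop_nhds_zero_nat
  have htM : Filter.Tendsto (fun n : ℕ => M ^ ((1 : ℝ) / n)) atTop (nhds 1) := by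
    have := (tendsto_const_nhds (x := M) (f := atTop (α := ℕ))).rpow hexp0
      (Or.inl (by positivity))
    simpa using this
  have hfbdd : IsBoundedUnder (· ≤ ·) atTop f := by
    refine ⟨M, Filter.eventually_map.2 (Eventually.of_forall fun n => ?_)⟩
    refine le_trans (hfM n) ?_
    rcases Nat.eq_zero_or_pos n with rfl | hn
    · simp; linarith
    · calc M ^ ((1:ℝ)/n) ≤ M ^ (1:ℝ) :=
            Real.rpow_le_rpow_of_exponent_le hM1 (by
              rw [div_le_one (by exact_mod_cast hn : (0:ℝ) < (n:ℝ))]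
              exact_mod_cast hn)
        _ = M := Real.rpow_one M
  have hle : Filter.limsup f atTop ≤ 1 := by
    have h1 := htM.limsup_eq
    calc Filter.limsup f atTop ≤ Filter.limsup (fun n : ℕ => M ^ ((1:ℝ)/n)) atTop :=
          Filter.limsup_le_limsup (Eventually.of_forall hfM)
            (isCoboundedUnder_le_of_le atTop (fun n => Real.rpow_nonneg (abs_nonneg _) _))
            htM.isBoundedUnder_le
      _ = 1 := h1
  have hge : (1 : ℝ) ≤ Filter.limsup f atTop := by
    apply le_of_forall_sub_le
    intro ε hε
    have htδ : Filter.Tendsto (fun n : ℕ => (δ/2) ^ ((1 : ℝ) / n)) atTop (nhds 1) := by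
      have := (tendsto_const_nhds (x := δ/2) (f := atTop (α := ℕ))).rpow hexp0
        (Or.inl (by positivity))
      simpa using this
    have hev : ∀ᶠ n : ℕ in atTop, 1 - ε ≤ (δ/2) ^ ((1 : ℝ) / n) :=
      htδ.eventually (eventually_ge_nhds (by linarith))
    have hfr : ∃ᶠ n in atTop, 1 - ε ≤ f n := by
      apply (hFa.and_eventually hev).mono
      rintro n ⟨h1, h2⟩
      refine le_trans h2 ?_
      exact Real.rpow_le_rpow (by positivity) h1 (by positivity)
    exact le_limsup_of_frequently_le hfr hfbdd
  -- conclude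
  have : Filter.limsup f atTop = 1 := le_antisymm hle hge
  exact this
end

section
/- The angle ω = arccos(1/3) satisfies: ω/π is irrational. Consequently the sequence n·(6ω) mod 2π is equidistributed, and in particular there exist infinitely many n such that cos(6(n+1/2)ω − π/4) ≥ 1/2. -/
/-!
Were `ω = arccos (1/3)` a rational multiple of `π`, Niven's theorem would put
`cos ω = 1/3` in `{0, ±1/2, ±1}`. So `6ω / 2π` is irrational and the integer multiples
of `6ω` are dense on the circle `ℝ ⧸ 2πℤ`. The circle being compact, every point of it
is then a cluster point of `n • 6ω` for `n : ℕ`, so `n • 6ω + (3ω - π/4)` returns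
infinitely often to the open arc where `cos > 1/2`.
-/

open Real Filter Set

theorem irrational_div_pi_of_cos_eq_ratCast {θ : ℝ} {q : ℚ} (hθ : cos θ = q)
    (hq : (q : ℝ) ∉ ({-1, -1 / 2, 0, 1 / 2, 1} : Set ℝ)) : Irrational (θ / π) := by
  rintro ⟨r, hr⟩
  have hθr : θ = r * π := by rw [hr, div_mul_cancel₀ _ pi_ne_zero]
  exact hq (hθ ▸ niven ⟨r, hθr⟩ ⟨q, hθ⟩)

theorem frequently_nsmul_mem_of_denseRange_zsmul {G : Type*} [AddGroup G] [TopologicalSpace G]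
    [CompactSpace G] [IsTopologicalAddGroup G] {y : G} (hy : DenseRange (· • y : ℤ → G))
    {U : Set G} (hU : IsOpen U) (hne : U.Nonempty) : ∃ᶠ n : ℕ in atTop, n • y ∈ U := by
  obtain ⟨x, hx⟩ := hne
  have hclus : MapClusterPt x atTop (· • y : ℕ → G) :=
    ((mapClusterPt_atTop_nsmul_tfae x y).out 0 3).mpr (hy x)
  exact mapClusterPt_iff_frequently.mp hclus U (hU.mem_nhds hx)

theorem frequently_lt_cos_nat_mul_add {θ : ℝ} (hθ : Irrational (θ / (2 * π))) (c : ℝ)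
    {t : ℝ} (ht : t < 1) : ∃ᶠ n : ℕ in atTop, t < cos (n * θ + c) := by
  have : Fact (0 < 2 * π) := ⟨two_pi_pos⟩
  have : CompactSpace Angle := inferInstanceAs (CompactSpace (AddCircle (2 * π)))
  have hdense : DenseRange (· • (θ : Angle) : ℤ → Angle) :=
    AddCircle.denseRange_zsmul_coe_iff.mpr hθ
  have hU : IsOpen {z : Angle | t < Angle.cos (z + c)} :=
    isOpen_lt continuous_const (Angle.continuous_cos.comp (continuous_add_const _))
  have hne : {z : Angle | t < Angle.cos (z + c)}.Nonempty :=
    ⟨(-c : ℝ), by simpa [← Angle.coe_add]⟩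
  refine (frequently_nsmul_mem_of_denseRange_zsmul hdense hU hne).mono
    fun n (hn : t < Angle.cos (n • (θ : Angle) + c)) => ?_
  rwa [← Angle.coe_nsmul, ← Angle.coe_add, Angle.cos_coe, nsmul_eq_mul] at hn

/-- `ω = arccos(1/3)` satisfies `ω/π` irrational; in particular there are infinitely many
`n` with `cos(6(n+1/2)ω − π/4) ≥ 1/2`. -/
theorem arccos_third_irrational_and_cos_large :
    Irrational (Real.arccos (1 / 3) / Real.pi) ∧
    {n : ℕ | (1 : ℝ) / 2 ≤
        Real.cos (6 * ((n : ℝ) + 1 / 2) * Real.arccos (1 / 3) - Real.pi / 4)}.Infinite := by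
  set ω := arccos (1 / 3)
  have hcos : cos ω = ((1 / 3 : ℚ) : ℝ) := by
    rw [cos_arccos] <;> norm_num
  have hirr : Irrational (ω / π) := irrational_div_pi_of_cos_eq_ratCast hcos (by norm_num)
  refine ⟨hirr, Nat.frequently_atTop_iff_infinite.mp ?_⟩
  have h6ω : Irrational (6 * ω / (2 * π)) := by
    rw [show 6 * ω / (2 * π) = (3 : ℕ) * (ω / π) by push_cast; ring]
    exact hirr.natCast_mul (by norm_num)
  refine (frequently_lt_cos_nat_mul_add h6ω (3 * ω - π / 4) one_half_lt_one).mono fun n hn => ?_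
  rw [show 6 * ((n : ℝ) + 1 / 2) * ω - π / 4 = n * (6 * ω) + (3 * ω - π / 4) by ring]
  exact hn.le
end
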